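/- Let q̄(s) = 48R³/(5s³) for R > 0. Then applying the operator L[q] := −(1/12)( q'' + (1/s + 3s/(R(1+s²/(2R)))) q' − q/s² ) yields L[q̄](s) = s/(1 + s²/(2R))³ + ε(s), where |ε(s)| ≤ C₀/s⁶ for all s ≥ 1, with C₀ depending only on R. -/

import Mathlib

/-- The radial (Fourier mode 1) lubrication operator with weight (1+s²/(2R))³. -/
noncomputable def Lop (R : ℝ) (q : ℝ → ℝ) (s : ℝ) : ℝ :=
  -(1 / 12) * (deriv (deriv q) s
    + (1 / s + 3 * s / (R * (1 + s ^ 2 / (2 * R)))) * deriv q s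
    - q s / s ^ 2)

lemma hasDerivAt_q (c s : ℝ) (hs : s ≠ 0) :
    HasDerivAt (fun t => c / (5 * t ^ 3)) (-3 * c / (5 * s ^ 4)) s := by
  have h5 : (5 : ℝ) * s ^ 3 ≠ 0 := by positivity
  have hd : HasDerivAt (fun t : ℝ => 5 * t ^ 3) (5 * (3 * s ^ 2)) s := by
    simpa using (hasDerivAt_pow 3 s).const_mul 5
  have := (hasDerivAt_const s c).div hd h5
  refine this.congr_deriv ?_
  rw [div_eq_div_iff (by positivity) (by positivity)]
  ring

lemma hasDerivAt_q' (c s : ℝ) (hs : s ≠ 0) :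
    HasDerivAt (fun t => -3 * c / (5 * t ^ 4)) (12 * c / (5 * s ^ 5)) s := by
  have h5 : (5 : ℝ) * s ^ 4 ≠ 0 := by positivity
  have hd : HasDerivAt (fun t : ℝ => 5 * t ^ 4) (5 * (4 * s ^ 3)) s := by
    simpa using (hasDerivAt_pow 4 s).const_mul 5
  have := (hasDerivAt_const s (-3 * c)).div hd h5
  refine this.congr_deriv ?_
  rw [div_eq_div_iff (by positivity) (by positivity)]
  ring

lemma deriv_q (c : ℝ) : ∀ s : ℝ, s ≠ 0 →
    deriv (fun t => c / (5 * t ^ 3)) s = -3 * c / (5 * s ^ 4) := fun s hs =>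
  (hasDerivAt_q c s hs).deriv

lemma deriv2_q (c s : ℝ) (hs : s ≠ 0) :
    deriv (deriv (fun t => c / (5 * t ^ 3))) s = 12 * c / (5 * s ^ 5) := by
  have hev : deriv (fun t => c / (5 * t ^ 3)) =ᶠ[nhds s]
      (fun t => -3 * c / (5 * t ^ 4)) := by
    filter_upwards [isOpen_ne.mem_nhds hs] with t ht
    exact deriv_q c t ht
  rw [hev.deriv_eq]
  exact (hasDerivAt_q' c s hs).deriv

theorem supersolution_computation (R : ℝ) (hR : 0 < R) :
    ∃ C₀ : ℝ, ∀ s : ℝ, 1 ≤ s →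
      |Lop R (fun t => 48 * R ^ 3 / (5 * t ^ 3)) s - s / (1 + s ^ 2 / (2 * R)) ^ 3|
        ≤ C₀ / s ^ 6 := by
  refine ⟨R ^ 4 * (96 + 96 * R + 256 * R ^ 2), fun s hs => ?_⟩
  have hs0 : (0 : ℝ) < s := lt_of_lt_of_le one_pos hs
  have hsne : s ≠ 0 := ne_of_gt hs0
  have hRne : R ≠ 0 := ne_of_gt hR
  have hden : (0 : ℝ) < 2 * R + s ^ 2 := by positivity
  have hw : 1 + s ^ 2 / (2 * R) = (2 * R + s ^ 2) / (2 * R) := by field_simp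
  set c := 48 * R ^ 3 with hc
  have key : Lop R (fun t => c / (5 * t ^ 3)) s - s / (1 + s ^ 2 / (2 * R)) ^ 3
      = R ^ 4 * (96 * s ^ 4 - 96 * R * s ^ 2 - 256 * R ^ 2)
        / (5 * s ^ 5 * (2 * R + s ^ 2) ^ 3) := by
    unfold Lop
    rw [deriv2_q c s hsne, deriv_q c s hsne, hw, hc]
    field_simp
    ring
  rw [key, abs_div, abs_of_pos (by positivity : (0:ℝ) < 5 * s ^ 5 * (2 * R + s ^ 2) ^ 3)]
  rw [div_le_div_iff₀ (by positivity) (by positivity)]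
  have hnum : |R ^ 4 * (96 * s ^ 4 - 96 * R * s ^ 2 - 256 * R ^ 2)|
      ≤ R ^ 4 * (96 + 96 * R + 256 * R ^ 2) * s ^ 4 := by
    rw [abs_mul, abs_of_pos (by positivity : (0:ℝ) < R ^ 4)]
    have hsq : (1:ℝ) ≤ s ^ 2 := by nlinarith
    have h1 : s ^ 2 ≤ s ^ 4 := by nlinarith [sq_nonneg s, mul_le_mul_of_nonneg_left hsq (sq_nonneg s)]
    have h2 : (1 : ℝ) ≤ s ^ 4 := by nlinarith
    have := abs_le.mpr (⟨by nlinarith, by nlinarith⟩ :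
      -(  (96 + 96 * R + 256 * R ^ 2) * s ^ 4) ≤ 96 * s ^ 4 - 96 * R * s ^ 2 - 256 * R ^ 2
        ∧ 96 * s ^ 4 - 96 * R * s ^ 2 - 256 * R ^ 2 ≤ (96 + 96 * R + 256 * R ^ 2) * s ^ 4)
    nlinarith [this, pow_pos hR 4]
  have hcube : s ^ 6 ≤ (2 * R + s ^ 2) ^ 3 := by nlinarith [sq_nonneg s, sq_nonneg (s^2)]
  calc |R ^ 4 * (96 * s ^ 4 - 96 * R * s ^ 2 - 256 * R ^ 2)| * s ^ 6
      ≤ (R ^ 4 * (96 + 96 * R + 256 * R ^ 2) * s ^ 4) * s ^ 6 := by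
        apply mul_le_mul_of_nonneg_right hnum (by positivity)
    _ ≤ R ^ 4 * (96 + 96 * R + 256 * R ^ 2) * (5 * s ^ 5 * (2 * R + s ^ 2) ^ 3) := by
        have hM : (0:ℝ) ≤ R ^ 4 * (96 + 96 * R + 256 * R ^ 2) := by positivity
        have h1 : s ^ 4 * s ^ 6 ≤ 5 * s ^ 5 * (2 * R + s ^ 2) ^ 3 := by
          have h2 : s ^ 4 * s ^ 6 ≤ s ^ 5 * s ^ 6 := by
            have : s ^ 4 ≤ s ^ 5 := by nlinarith [pow_pos hs0 4, mul_le_mul_of_nonneg_left hs (le_of_lt (pow_pos hs0 4))]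
            nlinarith [pow_pos hs0 6]
          have h3 : s ^ 5 * s ^ 6 ≤ 5 * s ^ 5 * (2 * R + s ^ 2) ^ 3 := by
            nlinarith [pow_pos hs0 5, hcube]
          linarith
        calc R ^ 4 * (96 + 96 * R + 256 * R ^ 2) * s ^ 4 * s ^ 6
            = R ^ 4 * (96 + 96 * R + 256 * R ^ 2) * (s ^ 4 * s ^ 6) := by ring
          _ ≤ _ := mul_le_mul_of_nonneg_left h1 hM
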